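/- Let A be an enriched hyper C_ω algebra. The map Ψ : A → S(U(A)) defined by Ψ(x) = ([x], [z]) for any z ∈ ÷x is well defined (independent of the choice of z, and ([x],[z]) is a snapshot), injective (by E4), surjective (by E3), and is an isomorphism of hyper C_ω algebras; in particular Ψ(÷x) ⊆ ÷Ψ(x). -/
import Mathlib


namespace HyperSwap

variable {L : Type*}

/-- `A ⪯ B` pointwise for subsets w.r.t. a relation `r`. -/
def setLe (r : L → L → Prop) (A B : Set L) : Prop := ∀ a ∈ A, ∀ b ∈ B, r a b

/-- `A ≡ B`: mutual pointwise `⪯`. -/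
def setEquiv (r : L → L → Prop) (A B : Set L) : Prop := setLe r A B ∧ setLe r B A

def Ub (r : L → L → Prop) (B : Set L) : Set L := {z | ∀ b ∈ B, r b z}
def Lb (r : L → L → Prop) (B : Set L) : Set L := {z | ∀ b ∈ B, r z b}
def minS (r : L → L → Prop) (B : Set L) : Set L := {x | x ∈ B ∧ ∀ b ∈ B, r x b}
def maxS (r : L → L → Prop) (B : Set L) : Set L := {x | x ∈ B ∧ ∀ b ∈ B, r b x}

/-- Morgado hypersupremum (supremoid). -/
def supm (r : L → L → Prop) (x y : L) : Set L := minS r (Ub r {x, y})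

/-- Morgado hyperinfimum (infimoid). -/
def infm (r : L → L → Prop) (x y : L) : Set L := maxS r (Lb r {x, y})

/-- `⊤ = Max(L)`. -/
def topSet (r : L → L → Prop) : Set L := maxS r Set.univ

/-- A set is stable if all its elements are pairwise similar. -/
def stable (r : L → L → Prop) (A : Set L) : Prop := ∀ a ∈ A, ∀ b ∈ A, r a b

/-- `R(x,y) = {z : x ⋏ z ⪯ y}`. -/
def Rset (r : L → L → Prop) (x y : L) : Set L := {z | setLe r (infm r x z) {y}}

/-- A preordered set. -/
structure Proset (L : Type*) where
  le : L → L → Prop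
  refl : ∀ x, le x x
  trans : ∀ x y z, le x y → le y z → le x z

/-- A Morgado hyperlattice: a proset with nonempty infimoids and supremoids. -/
structure Morgado (L : Type*) extends Proset L where
  inf_ne : ∀ x y, (infm le x y).Nonempty
  sup_ne : ∀ x y, (supm le x y).Nonempty

/-- A Sette implicative hyperlattice, via the characterization `x ⊸ y = Max(R(x,y))`. -/
structure IHL (L : Type*) extends Morgado L where
  imp : L → L → Set L
  imp_ne : ∀ x y, (imp x y).Nonempty
  imp_eq : ∀ x y, imp x y = maxS le (Rset le x y)

/-- A hyper `C_ω` algebra: an IHL with `÷` satisfying (H1') and (H2'). -/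
structure HCA (L : Type*) extends IHL L where
  dv : L → Set L
  dv_ne : ∀ x, (dv x).Nonempty
  H1 : ∀ x, setEquiv le (⋃ y ∈ dv x, supm le x y) (topSet le)
  H2 : ∀ x, setLe le (⋃ y ∈ dv x, dv y) {x}

/-- `x ∼ y` iff `x, y ∈ ÷z` for some `z`. -/
def simRel {α : Type*} (dv : α → Set α) (x y : α) : Prop := ∃ z, x ∈ dv z ∧ y ∈ dv z

/-- An enriched hyper `C_ω` algebra: a hyper `C_ω` algebra satisfying E0–E4. -/
structure EHCA (L : Type*) extends HCA L where
  E0 : ∀ x, x ∈ ⋃ y ∈ dv x, dv y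
  E1 : ∀ x, stable le (dv x)
  E2 : ∀ x y z, simRel dv x y → simRel dv y z → simRel dv x z
  E3 : ∀ x y, setEquiv le (supm le x y) (topSet le) →
        ∃ z, simRel dv x z ∧ ∀ w ∈ dv z, simRel dv y w
  E4 : ∀ x y, simRel dv x y → (∀ a ∈ dv x, ∀ b ∈ dv y, simRel dv a b) → x = y

/-- Domain of the hyper swap structure: `{z ∈ L × L : z₁ ⋎ z₂ ≡ ⊤}`. -/
def SDom (H : IHL L) : Set (L × L) :=
  {z | setEquiv H.le (supm H.le z.1 z.2) (topSet H.le)}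

/-- Preorder on snapshots via first coordinates. -/
def swapLe (H : IHL L) (z w : SDom H) : Prop := H.le z.1.1 w.1.1

def swapInf (H : IHL L) (z w : SDom H) : Set (SDom H) :=
  {u | u.1.1 ∈ infm H.le z.1.1 w.1.1}

def swapSup (H : IHL L) (z w : SDom H) : Set (SDom H) :=
  {u | u.1.1 ∈ supm H.le z.1.1 w.1.1}

def swapImp (H : IHL L) (z w : SDom H) : Set (SDom H) :=
  {u | u.1.1 ∈ H.imp z.1.1 w.1.1}

/-- `÷z = {u ∈ S : u₁ = z₂ and u₂ ⪯ z₁}`. -/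
def swapDiv (H : IHL L) (z : SDom H) : Set (SDom H) :=
  {u | u.1.1 = z.1.2 ∧ H.le u.1.2 z.1.1}

/-- The quotient preorder on `U(A) = A/∼`. -/
def qle (A : EHCA L) (a b : Quot (simRel A.dv)) : Prop :=
  ∃ x y, a = Quot.mk _ x ∧ b = Quot.mk _ y ∧ A.le x y

section Aux

variable (A : EHCA L)

lemma sim_refl (x : L) : simRel A.dv x x := by
  have h := A.E0 x
  simp only [Set.mem_iUnion] at h
  obtain ⟨y, hy, hx⟩ := h
  exact ⟨y, hx, hx⟩

lemma sim_symm {x y : L} (h : simRel A.dv x y) : simRel A.dv y x := by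
  obtain ⟨z, hx, hy⟩ := h; exact ⟨z, hy, hx⟩

lemma sim_equiv : Equivalence (simRel A.dv) :=
  ⟨sim_refl A, sim_symm A, fun h h' => A.E2 _ _ _ h h'⟩

lemma sim_le {x y : L} (h : simRel A.dv x y) : A.le x y := by
  obtain ⟨z, hx, hy⟩ := h; exact A.E1 z x hx y hy

lemma mk_eq_iff {x y : L} :
    Quot.mk (simRel A.dv) x = Quot.mk (simRel A.dv) y ↔ simRel A.dv x y := by
  constructor
  · intro h
    exact ((sim_equiv A).eqvGen_iff).1 (Quot.eqvGen_exact h)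
  · exact Quot.sound

lemma qle_mk {x y : L} :
    qle A (Quot.mk (simRel A.dv) x) (Quot.mk (simRel A.dv) y) ↔ A.le x y := by
  constructor
  · rintro ⟨a, b, ha, hb, hab⟩
    have h1 : A.le x a := sim_le A ((mk_eq_iff A).1 ha)
    have h2 : A.le b y := sim_le A (sim_symm A ((mk_eq_iff A).1 hb))
    exact A.trans _ _ _ h1 (A.trans _ _ _ hab h2)
  · intro h; exact ⟨x, y, rfl, rfl, h⟩

lemma mem_Ub_q {x y u : L} :
    Quot.mk (simRel A.dv) u ∈
      Ub (qle A) {Quot.mk (simRel A.dv) x, Quot.mk (simRel A.dv) y} ↔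
    u ∈ Ub A.le {x, y} := by
  constructor
  · intro h
    rintro b (rfl | rfl)
    · exact (qle_mk A).1 (h _ (Or.inl rfl))
    · exact (qle_mk A).1 (h _ (Or.inr rfl))
  · intro h
    rintro b (rfl | rfl)
    · exact (qle_mk A).2 (h _ (Or.inl rfl))
    · exact (qle_mk A).2 (h _ (Or.inr rfl))

lemma mem_Lb_q {x y u : L} :
    Quot.mk (simRel A.dv) u ∈
      Lb (qle A) {Quot.mk (simRel A.dv) x, Quot.mk (simRel A.dv) y} ↔
    u ∈ Lb A.le {x, y} := by
  constructor
  · intro h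
    rintro b (rfl | rfl)
    · exact (qle_mk A).1 (h _ (Or.inl rfl))
    · exact (qle_mk A).1 (h _ (Or.inr rfl))
  · intro h
    rintro b (rfl | rfl)
    · exact (qle_mk A).2 (h _ (Or.inl rfl))
    · exact (qle_mk A).2 (h _ (Or.inr rfl))

lemma mem_supm_q {x y u : L} :
    Quot.mk (simRel A.dv) u ∈
      supm (qle A) (Quot.mk (simRel A.dv) x) (Quot.mk (simRel A.dv) y) ↔
    u ∈ supm A.le x y := by
  constructor
  · rintro ⟨hub, hmin⟩
    refine ⟨(mem_Ub_q A).1 hub, fun b hb => ?_⟩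
    exact (qle_mk A).1 (hmin _ ((mem_Ub_q A).2 hb))
  · rintro ⟨hub, hmin⟩
    refine ⟨(mem_Ub_q A).2 hub, fun b hb => ?_⟩
    obtain ⟨b₀, rfl⟩ := Quot.exists_rep b
    exact (qle_mk A).2 (hmin _ ((mem_Ub_q A).1 hb))

lemma mem_infm_q {x y u : L} :
    Quot.mk (simRel A.dv) u ∈
      infm (qle A) (Quot.mk (simRel A.dv) x) (Quot.mk (simRel A.dv) y) ↔
    u ∈ infm A.le x y := by
  constructor
  · rintro ⟨hlb, hmax⟩
    refine ⟨(mem_Lb_q A).1 hlb, fun b hb => ?_⟩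
    exact (qle_mk A).1 (hmax _ ((mem_Lb_q A).2 hb))
  · rintro ⟨hlb, hmax⟩
    refine ⟨(mem_Lb_q A).2 hlb, fun b hb => ?_⟩
    obtain ⟨b₀, rfl⟩ := Quot.exists_rep b
    exact (qle_mk A).2 (hmax _ ((mem_Lb_q A).1 hb))

lemma mem_top_q {u : L} :
    Quot.mk (simRel A.dv) u ∈ topSet (qle A) ↔ u ∈ topSet A.le := by
  constructor
  · rintro ⟨-, hmax⟩
    refine ⟨trivial, fun b _ => (qle_mk A).1 (hmax _ trivial)⟩
  · rintro ⟨-, hmax⟩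
    refine ⟨trivial, fun b _ => ?_⟩
    obtain ⟨b₀, rfl⟩ := Quot.exists_rep b
    exact (qle_mk A).2 (hmax _ trivial)

lemma supm_top_q {x y : L}
    (h : setEquiv A.le (supm A.le x y) (topSet A.le)) :
    setEquiv (qle A)
      (supm (qle A) (Quot.mk (simRel A.dv) x) (Quot.mk (simRel A.dv) y))
      (topSet (qle A)) := by
  constructor
  · intro a ha b hb
    obtain ⟨a₀, rfl⟩ := Quot.exists_rep a
    obtain ⟨b₀, rfl⟩ := Quot.exists_rep b
    exact (qle_mk A).2 (h.1 _ ((mem_supm_q A).1 ha) _ ((mem_top_q A).1 hb))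
  · intro a ha b hb
    obtain ⟨a₀, rfl⟩ := Quot.exists_rep a
    obtain ⟨b₀, rfl⟩ := Quot.exists_rep b
    exact (qle_mk A).2 (h.2 _ ((mem_top_q A).1 ha) _ ((mem_supm_q A).1 hb))

lemma supm_top_q' {x y : L}
    (h : setEquiv (qle A)
      (supm (qle A) (Quot.mk (simRel A.dv) x) (Quot.mk (simRel A.dv) y))
      (topSet (qle A))) :
    setEquiv A.le (supm A.le x y) (topSet A.le) := by
  constructor
  · intro a ha b hb
    exact (qle_mk A).1 (h.1 _ ((mem_supm_q A).2 ha) _ ((mem_top_q A).2 hb))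
  · intro a ha b hb
    exact (qle_mk A).1 (h.2 _ ((mem_top_q A).2 ha) _ ((mem_supm_q A).2 hb))

lemma mem_Rset_q {x y d : L} :
    Quot.mk (simRel A.dv) d ∈
      Rset (qle A) (Quot.mk (simRel A.dv) x) (Quot.mk (simRel A.dv) y) ↔
    d ∈ Rset A.le x y := by
  constructor
  · intro h u hu b hb
    rcases hb with rfl
    exact (qle_mk A).1 (h _ ((mem_infm_q A).2 hu) _ rfl)
  · intro h u hu b hb
    rcases hb with rfl
    obtain ⟨u₀, rfl⟩ := Quot.exists_rep u
    exact (qle_mk A).2 (h _ ((mem_infm_q A).1 hu) _ rfl)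

end Aux

theorem stmt19 (A : EHCA L) :
    -- Ψ is well defined: independent of the choice of z ∈ ÷x ...
    (∀ x, ∀ z ∈ A.dv x, ∀ z' ∈ A.dv x,
      Quot.mk (simRel A.dv) z = Quot.mk (simRel A.dv) z') ∧
    -- ... and ([x],[z]) is a snapshot of S(U(A)):
    (∀ x, ∀ z ∈ A.dv x,
      setEquiv (qle A) (supm (qle A) (Quot.mk (simRel A.dv) x) (Quot.mk (simRel A.dv) z))
        (topSet (qle A))) ∧
    -- Ψ is injective (by E4):
    (∀ x y z w, z ∈ A.dv x → w ∈ A.dv y →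
      Quot.mk (simRel A.dv) x = Quot.mk (simRel A.dv) y →
      Quot.mk (simRel A.dv) z = Quot.mk (simRel A.dv) w → x = y) ∧
    -- Ψ is surjective (by E3):
    (∀ p q : Quot (simRel A.dv),
      setEquiv (qle A) (supm (qle A) p q) (topSet (qle A)) →
      ∃ x, ∃ z ∈ A.dv x, p = Quot.mk (simRel A.dv) x ∧ q = Quot.mk (simRel A.dv) z) ∧
    -- Ψ is a morphism of hyper C_ω algebras (first coordinates):
    (∀ x y d, d ∈ infm A.le x y →
      Quot.mk (simRel A.dv) d ∈
        infm (qle A) (Quot.mk (simRel A.dv) x) (Quot.mk (simRel A.dv) y)) ∧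
    (∀ x y d, d ∈ supm A.le x y →
      Quot.mk (simRel A.dv) d ∈
        supm (qle A) (Quot.mk (simRel A.dv) x) (Quot.mk (simRel A.dv) y)) ∧
    (∀ x y d, d ∈ A.imp x y →
      Quot.mk (simRel A.dv) d ∈
        maxS (qle A) (Rset (qle A) (Quot.mk (simRel A.dv) x) (Quot.mk (simRel A.dv) y))) ∧
    -- Ψ(÷x) ⊆ ÷Ψ(x): for z ∈ ÷x, Ψ(z) = ([z],[y]) with y ∈ ÷z has [y] ⪯ [x]:
    (∀ x, ∀ z ∈ A.dv x, ∀ y ∈ A.dv z,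
      qle A (Quot.mk (simRel A.dv) y) (Quot.mk (simRel A.dv) x)) := by
  refine ⟨?_, ?_, ?_, ?_, ?_, ?_, ?_, ?_⟩
  · -- well defined
    intro x z hz z' hz'
    exact Quot.sound ⟨x, hz, hz'⟩
  · -- snapshot
    intro x z hz
    refine supm_top_q A ?_
    have h := A.H1 x
    constructor
    · intro a ha b hb
      refine h.1 a ?_ b hb
      simp only [Set.mem_iUnion]
      exact ⟨z, hz, ha⟩
    · intro a ha b hb
      refine h.2 a ha b ?_
      simp only [Set.mem_iUnion]
      exact ⟨z, hz, hb⟩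
  · -- injective
    intro x y z w hz hw hxy hzw
    have hsimxy : simRel A.dv x y := (mk_eq_iff A).1 hxy
    have hsimzw : simRel A.dv z w := (mk_eq_iff A).1 hzw
    refine A.E4 x y hsimxy ?_
    intro a ha b hb
    have h1 : simRel A.dv a z := ⟨x, ha, hz⟩
    have h2 : simRel A.dv w b := ⟨y, hw, hb⟩
    exact A.E2 _ _ _ (A.E2 _ _ _ h1 hsimzw) h2
  · -- surjective
    intro p q hpq
    obtain ⟨x, rfl⟩ := Quot.exists_rep p
    obtain ⟨y, rfl⟩ := Quot.exists_rep q
    have h := supm_top_q' A hpq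
    obtain ⟨z, hxz, hw⟩ := A.E3 x y h
    obtain ⟨w, hwz⟩ := A.dv_ne z
    refine ⟨z, w, hwz, Quot.sound hxz, Quot.sound (hw w hwz)⟩
  · -- infm
    intro x y d hd
    exact (mem_infm_q A).2 hd
  · -- supm
    intro x y d hd
    exact (mem_supm_q A).2 hd
  · -- imp
    intro x y d hd
    rw [A.imp_eq] at hd
    obtain ⟨hR, hmax⟩ := hd
    refine ⟨(mem_Rset_q A).2 hR, fun b hb => ?_⟩
    obtain ⟨b₀, rfl⟩ := Quot.exists_rep b
    exact (qle_mk A).2 (hmax _ ((mem_Rset_q A).1 hb))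
  · -- div
    intro x z hz y hy
    refine (qle_mk A).2 ?_
    refine A.H2 x y ?_ x rfl
    simp only [Set.mem_iUnion]
    exact ⟨z, hz, hy⟩

end HyperSwap
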